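/- Let k ≥ 1, let n ≥ 2, and let ζ ∈ ℂ be a primitive (2n)-th root of unity. Then 2 · (the ℂ-dimension of the centralizer subalgebra {X : Matrix I_k I_k ℂ | X·D(k,ζ) = D(k,ζ)·X and X·P_k = P_k·X}) = Σ_{0 ≤ a ≤ k} Σ_{0 ≤ b ≤ k, a ≡ b (mod n)} C(k,a)·C(k,b). That is, dim Z_k(D_n) is half the dimension of Z_k(C_{2n}), equal to half the coefficient of z^k in (1+z)^{2k} reduced modulo z^n = 1. -/

import Mathlib

open Matrix

/-- The number of `-1` factors (encoded as `true`) in a simple tensor index. -/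
def wt {k : ℕ} (r : Fin k → Bool) : ℕ := (Finset.univ.filter fun i => r i = true).card

/-- The sign-reversal `-r` of an index, `(−r) i = ¬ (r i)`. -/
def negt {k : ℕ} (r : Fin k → Bool) : Fin k → Bool := fun i => !(r i)

/-- The matrix of `g^{⊗k}` on `V^{⊗k}` for `g = diag(ζ⁻¹, ζ)`. -/
noncomputable def Dmat (k : ℕ) (ζ : ℂ) : Matrix (Fin k → Bool) (Fin k → Bool) ℂ :=
  Matrix.diagonal fun r => ζ ^ ((k : ℤ) - 2 * (wt r : ℤ))

/-- The 0–1 matrix with `P r s = 1` iff `s = −r`. -/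
noncomputable def Pmat (k : ℕ) : Matrix (Fin k → Bool) (Fin k → Bool) ℂ :=
  Matrix.of fun r s => if s = negt r then 1 else 0

/-- The centralizer of a matrix `M`, as a submodule of the matrix algebra. -/
noncomputable def commSub {I : Type*} [Fintype I] [DecidableEq I] (M : Matrix I I ℂ) :
    Submodule ℂ (Matrix I I ℂ) where
  carrier := {X | X * M = M * X}
  add_mem' := by
    intro a b ha hb
    simp only [Set.mem_setOf_eq] at *
    rw [add_mul, mul_add, ha, hb]
  zero_mem' := by simp
  smul_mem' := by
    intro c X hX
    simp only [Set.mem_setOf_eq] at *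
    rw [smul_mul_assoc, mul_smul_comm, hX]

/-! Commuting with the diagonal matrix `Dmat k ζ` forces `X r s = 0` unless the eigenvalues
`ζ ^ (k - 2|r|)` and `ζ ^ (k - 2|s|)` agree, i.e. unless `|r| ≡ |s| [MOD n]`; commuting with the
permutation matrix `Pmat k` means `X (-r) (-s) = X r s`. So the centralizer consists of the
functions on the congruent pairs `(r, s)` that are invariant under the fixed-point-free involution
`(r, s) ↦ (-r, -s)`. Its dimension is the number of orbits: for a fixed coordinate `i₀`, the
congruent pairs with `r i₀ = false` form a transversal, which contains exactly half of them. -/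

open Finset

variable {k : ℕ}

@[simp]
theorem negt_apply (r : Fin k → Bool) (i : Fin k) : negt r i = !r i := rfl

@[simp]
theorem negt_negt (r : Fin k → Bool) : negt (negt r) = r := by
  funext i; simp

theorem negt_involutive : Function.Involutive (negt (k := k)) := negt_negt

theorem wt_add_wt_negt (r : Fin k → Bool) : wt r + wt (negt r) = k := by
  simpa [wt, negt] using card_filter_add_card_filter_not (s := univ) (fun i => r i = true)

theorem wt_negt_modEq {n : ℕ} {r s : Fin k → Bool} (h : wt r ≡ wt s [MOD n]) :
    wt (negt r) ≡ wt (negt s) [MOD n] := by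
  refine Nat.ModEq.add_left_cancel h ?_
  rw [wt_add_wt_negt, wt_add_wt_negt]

theorem sum_comp_wt {M : Type*} [AddCommMonoid M] (g : ℕ → M) :
    ∑ r : Fin k → Bool, g (wt r) = ∑ a ∈ range (k + 1), k.choose a • g a := by
  have h := sum_powerset_apply_card g (x := (univ : Finset (Fin k)))
  rw [card_univ, Fintype.card_fin, powerset_univ] at h
  rw [← h]
  refine sum_nbij' (fun r => ({i | r i = true} : Finset _)) (fun s i => decide (i ∈ s))
    ?_ ?_ ?_ ?_ ?_ <;> simp [wt]

section Centralizer

variable {I : Type*} [Fintype I] [DecidableEq I]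

theorem mem_commSub_iff {M X : Matrix I I ℂ} : X ∈ commSub M ↔ X * M = M * X := Iff.rfl

theorem mem_commSub_diagonal_iff {d : I → ℂ} {X : Matrix I I ℂ} :
    X ∈ commSub (diagonal d) ↔ ∀ i j, d i ≠ d j → X i j = 0 := by
  simp only [mem_commSub_iff, ← Matrix.ext_iff, mul_diagonal, diagonal_mul]
  refine forall₂_congr fun i j => ⟨fun h hd => ?_, fun h => ?_⟩
  · have : X i j * (d j - d i) = 0 := by rw [mul_sub, h, mul_comm, sub_self]
    exact (mul_eq_zero.mp this).resolve_right (sub_ne_zero.mpr hd.symm)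
  · by_cases hd : d i = d j
    · rw [hd, mul_comm]
    · rw [h hd, zero_mul, mul_zero]

theorem mem_commSub_permMatrix_iff {σ : Equiv.Perm I} {X : Matrix I I ℂ} :
    X ∈ commSub σ.toPEquiv.toMatrix ↔ ∀ i j, X (σ i) (σ j) = X i j := by
  rw [mem_commSub_iff, PEquiv.mul_toMatrix_toPEquiv, PEquiv.toMatrix_toPEquiv_mul,
    ← Matrix.ext_iff]
  refine ⟨fun h i j => ?_, fun h i j => ?_⟩
  · simpa using (h i (σ j)).symm
  · simpa using (h i (σ.symm j)).symm

end Centralizer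

theorem IsPrimitiveRoot.zpow_sub_two_mul_eq_iff {K : Type*} [CommGroupWithZero K] {ζ : K}
    {n : ℕ} (hn : n ≠ 0) (hζ : IsPrimitiveRoot ζ (2 * n)) (k a b : ℕ) :
    ζ ^ ((k : ℤ) - 2 * a) = ζ ^ ((k : ℤ) - 2 * b) ↔ a ≡ b [MOD n] := by
  have hζ0 : ζ ≠ 0 := hζ.ne_zero (by omega)
  rw [← div_eq_one_iff_eq (zpow_ne_zero _ hζ0), ← zpow_sub₀ hζ0, hζ.zpow_eq_one_iff_dvd,
    Nat.modEq_iff_dvd, show (k : ℤ) - 2 * a - (k - 2 * b) = 2 * (b - a) by ring]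
  push_cast
  exact mul_dvd_mul_iff_left two_ne_zero

theorem mem_commSub_Dmat_iff {ζ : ℂ} {n : ℕ} (hn : n ≠ 0) (hζ : IsPrimitiveRoot ζ (2 * n))
    {X : Matrix (Fin k → Bool) (Fin k → Bool) ℂ} :
    X ∈ commSub (Dmat k ζ) ↔ ∀ r s, ¬ wt r ≡ wt s [MOD n] → X r s = 0 := by
  simp only [Dmat, mem_commSub_diagonal_iff, ne_eq, hζ.zpow_sub_two_mul_eq_iff hn]

theorem Pmat_eq_toMatrix : Pmat k = (negt_involutive.toPerm _).toPEquiv.toMatrix := by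
  ext r s
  simp [Pmat, PEquiv.toMatrix_apply, eq_comm]

theorem mem_commSub_Pmat_iff {X : Matrix (Fin k → Bool) (Fin k → Bool) ℂ} :
    X ∈ commSub (Pmat k) ↔ ∀ r s, X (negt r) (negt s) = X r s := by
  rw [Pmat_eq_toMatrix, mem_commSub_permMatrix_iff]
  rfl

def congrPairs (k n : ℕ) : Finset ((Fin k → Bool) × (Fin k → Bool)) :=
  {p | wt p.1 ≡ wt p.2 [MOD n]}

def halfCongrPairs (n : ℕ) (i₀ : Fin k) : Finset ((Fin k → Bool) × (Fin k → Bool)) :=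
  {p ∈ congrPairs k n | p.1 i₀ = false}

section Transversal

variable {n : ℕ}

theorem mem_congrPairs {p : (Fin k → Bool) × (Fin k → Bool)} :
    p ∈ congrPairs k n ↔ wt p.1 ≡ wt p.2 [MOD n] := by
  simp [congrPairs]

theorem card_congrPairs :
    #(congrPairs k n) = ∑ a ∈ range (k + 1), ∑ b ∈ range (k + 1),
      if a ≡ b [MOD n] then k.choose a * k.choose b else 0 := by
  have inner (a : ℕ) : ∑ s : Fin k → Bool, (if a ≡ wt s [MOD n] then 1 else 0) =
      ∑ b ∈ range (k + 1), k.choose b • if a ≡ b [MOD n] then 1 else 0 :=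
    sum_comp_wt fun b => if a ≡ b [MOD n] then 1 else 0
  rw [congrPairs, card_filter, Fintype.sum_prod_type]
  simp_rw [inner]
  rw [sum_comp_wt fun a => ∑ b ∈ range (k + 1), k.choose b • if a ≡ b [MOD n] then 1 else 0]
  simp_rw [smul_eq_mul, mul_sum, mul_ite, mul_one, mul_zero]

theorem card_congrPairs_eq_two_mul (i₀ : Fin k) :
    #(congrPairs k n) = 2 * #(halfCongrPairs n i₀) := by
  rw [two_mul, halfCongrPairs, ← card_filter_add_card_filter_not (fun p => p.1 i₀ = false)]
  congr 1
  refine card_nbij' (Prod.map negt negt) (Prod.map negt negt) ?_ ?_ ?_ ?_ <;> intro p hp <;>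
    simp_all [mem_congrPairs, wt_negt_modEq, negt_involutive.prodMap negt_involutive p]

theorem prodMap_negt_mem_congrPairs {p : (Fin k → Bool) × (Fin k → Bool)} :
    Prod.map negt negt p ∈ congrPairs k n ↔ p ∈ congrPairs k n := by
  refine ⟨fun h => ?_, fun h => ?_⟩
  · exact mem_congrPairs.mpr (by simpa using wt_negt_modEq (mem_congrPairs.mp h))
  · exact mem_congrPairs.mpr (wt_negt_modEq (mem_congrPairs.mp h))

def canonPair (i₀ : Fin k) (p : (Fin k → Bool) × (Fin k → Bool)) :
    (Fin k → Bool) × (Fin k → Bool) :=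
  if p.1 i₀ = false then p else Prod.map negt negt p

theorem canonPair_prodMap_negt (i₀ : Fin k) (p : (Fin k → Bool) × (Fin k → Bool)) :
    canonPair i₀ (Prod.map negt negt p) = canonPair i₀ p := by
  cases h : p.1 i₀ <;> simp [canonPair, h, negt_involutive.prodMap negt_involutive p]

theorem canonPair_mem_congrPairs_iff {i₀ : Fin k} {p : (Fin k → Bool) × (Fin k → Bool)} :
    canonPair i₀ p ∈ congrPairs k n ↔ p ∈ congrPairs k n := by
  unfold canonPair
  split_ifs
  · rfl
  · exact prodMap_negt_mem_congrPairs

theorem canonPair_mem_halfCongrPairs_iff {i₀ : Fin k} {p : (Fin k → Bool) × (Fin k → Bool)} :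
    canonPair i₀ p ∈ halfCongrPairs n i₀ ↔ p ∈ congrPairs k n := by
  rw [halfCongrPairs, mem_filter, canonPair_mem_congrPairs_iff, and_iff_left_iff_imp]
  intro
  cases h : p.1 i₀ <;> simp [canonPair, h]

theorem canonPair_eq_self {i₀ : Fin k} {p : (Fin k → Bool) × (Fin k → Bool)}
    (hp : p ∈ halfCongrPairs n i₀) : canonPair i₀ p = p :=
  if_pos (mem_filter.mp hp).2

end Transversal

def restrictHalf (n : ℕ) (i₀ : Fin k) :
    Matrix (Fin k → Bool) (Fin k → Bool) ℂ →ₗ[ℂ] (halfCongrPairs n i₀ → ℂ) where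
  toFun X p := X p.1.1 p.1.2
  map_add' _ _ := rfl
  map_smul' _ _ := rfl

section Dimension

variable {n : ℕ} {ζ : ℂ}

theorem apply_canonPair {X : Matrix (Fin k → Bool) (Fin k → Bool) ℂ}
    (hX : X ∈ commSub (Pmat k)) (i₀ : Fin k) (p : (Fin k → Bool) × (Fin k → Bool)) :
    X (canonPair i₀ p).1 (canonPair i₀ p).2 = X p.1 p.2 := by
  unfold canonPair
  split_ifs
  · rfl
  · exact mem_commSub_Pmat_iff.mp hX p.1 p.2

theorem bijective_restrictHalf_centralizer (hn : n ≠ 0) (hζ : IsPrimitiveRoot ζ (2 * n))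
    (i₀ : Fin k) :
    Function.Bijective
      ((restrictHalf n i₀).domRestrict (commSub (Dmat k ζ) ⊓ commSub (Pmat k))) := by
  constructor
  · refine (injective_iff_map_eq_zero _).mpr fun ⟨X, hX⟩ hres => ?_
    obtain ⟨hD, hP⟩ := Submodule.mem_inf.mp hX
    ext r s
    show X r s = 0
    by_cases hrs : (r, s) ∈ congrPairs k n
    · rw [← apply_canonPair hP i₀ (r, s)]
      exact congrFun hres ⟨_, canonPair_mem_halfCongrPairs_iff.mpr hrs⟩
    · exact (mem_commSub_Dmat_iff hn hζ).mp hD r s fun h => hrs (mem_congrPairs.mpr h)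
  · intro c
    let extendByZero (q : (Fin k → Bool) × (Fin k → Bool)) : ℂ :=
      if h : q ∈ halfCongrPairs n i₀ then c ⟨q, h⟩ else 0
    have hD : of (fun r s => extendByZero (canonPair i₀ (r, s))) ∈ commSub (Dmat k ζ) := by
      refine (mem_commSub_Dmat_iff hn hζ).mpr fun r s hrs => dif_neg ?_
      rwa [canonPair_mem_halfCongrPairs_iff, mem_congrPairs]
    have hP : of (fun r s => extendByZero (canonPair i₀ (r, s))) ∈ commSub (Pmat k) :=
      mem_commSub_Pmat_iff.mpr fun r s => congrArg extendByZero (canonPair_prodMap_negt i₀ (r, s))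
    refine ⟨⟨_, Submodule.mem_inf.mpr ⟨hD, hP⟩⟩, funext fun ⟨p, hp⟩ => ?_⟩
    change extendByZero (canonPair i₀ p) = c ⟨p, hp⟩
    rw [canonPair_eq_self hp]
    exact dif_pos hp

theorem finrank_centralizer (hn : n ≠ 0) (hζ : IsPrimitiveRoot ζ (2 * n)) (i₀ : Fin k) :
    Module.finrank ℂ ↥(commSub (Dmat k ζ) ⊓ commSub (Pmat k)) =
      #(halfCongrPairs n i₀) := by
  rw [(LinearEquiv.ofBijective _ (bijective_restrictHalf_centralizer hn hζ i₀)).finrank_eq,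
    Module.finrank_fintype_fun_eq_card, Fintype.card_coe]

end Dimension

/-- `dim Z_k(D_n)` is half the dimension of `Z_k(C_{2n})`:
`2·dim Z_k(D_n) = Σ_{a ≡ b mod n} C(k,a)·C(k,b)`. -/
theorem stmt8 (k n : ℕ) (hk : 1 ≤ k) (hn : 2 ≤ n) (ζ : ℂ)
    (hζ : IsPrimitiveRoot ζ (2 * n)) :
    2 * Module.finrank ℂ ↥(commSub (Dmat k ζ) ⊓ commSub (Pmat k)) =
      ∑ a ∈ Finset.range (k + 1), ∑ b ∈ Finset.range (k + 1),
        if a ≡ b [MOD n] then k.choose a * k.choose b else 0 := by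
  rw [finrank_centralizer (by omega) hζ ⟨0, hk⟩, ← card_congrPairs_eq_two_mul,
    card_congrPairs]
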